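/- arXiv:2501.03364 — 2 statements merged into one kernel-verified Lean document; each statement's English description precedes it below -/
import Mathlib

section
/- Let L₁ (signal) and L₂ (noise) be linear operators on a Hilbert space, ψ a unit vector, and Π the orthogonal projection onto span{ψ, L₂ψ}. If Var_ψ(L₂) > 0, then ⟨ψ, L₁†(I − Π)L₁ψ⟩ = Var_ψ(L₁) − |Cov_ψ(L₁, L₂)|²/Var_ψ(L₂), where Cov_ψ(A,B) = ⟨ψ, A†Bψ⟩ − ⟨ψ, A†ψ⟩⟨ψ, Bψ⟩ and Var_ψ(A) = Cov_ψ(A,A). -/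
/-!
A symmetric idempotent is the orthogonal projection onto its range. Replacing `L₂ ψ` by its
component `d = L₂ ψ - ⟪ψ, L₂ ψ⟫ ψ` orthogonal to `ψ` (one Gram–Schmidt step) splits the
projection onto `span {ψ, L₂ ψ}` into the rank-one projections onto `ψ` and onto `d`. Their
contributions to `⟪u, P u⟫` are `|⟪ψ, u⟫|²` and `|⟪u, d⟫|² / ‖d‖²`, and
`⟪u, d⟫ = Cov_ψ(L₁, L₂)`, `‖d‖² = Var_ψ(L₂)` for `u = L₁ ψ`.
-/

open Submodule
open scoped InnerProductSpace

section

variable {𝕜 E : Type*} [RCLike 𝕜] [NormedAddCommGroup E] [InnerProductSpace 𝕜 E]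

theorem LinearMap.IsSymmetricProjection.eq_starProjection {p : E →ₗ[𝕜] E}
    (hp : p.IsSymmetricProjection) {K : Submodule 𝕜 E} [K.HasOrthogonalProjection]
    (hK : LinearMap.range p = K) : p = K.starProjection :=
  (hp.ext_iff K.isSymmetricProjection_starProjection).mpr (by rw [hK, range_starProjection])

theorem Submodule.IsOrtho.starProjection_sup {U V : Submodule 𝕜 E} (h : U ⟂ V)
    [U.HasOrthogonalProjection] [V.HasOrthogonalProjection] [(U ⊔ V).HasOrthogonalProjection]
    (u : E) : (U ⊔ V).starProjection u = U.starProjection u + V.starProjection u := by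
  refine eq_starProjection_of_mem_orthogonal
    (add_mem (mem_sup_left (U.starProjection_apply_mem u))
      (mem_sup_right (V.starProjection_apply_mem u))) ?_
  rw [← inf_orthogonal, mem_inf]
  constructor
  · rw [← sub_sub]
    exact sub_mem (sub_starProjection_mem_orthogonal u) (h.symm (V.starProjection_apply_mem u))
  · rw [add_comm, ← sub_sub]
    exact sub_mem (sub_starProjection_mem_orthogonal u) (h (U.starProjection_apply_mem u))

theorem Submodule.inner_starProjection_singleton_right (v u : E) :
    ⟪u, (𝕜 ∙ v).starProjection u⟫_𝕜 = ((‖⟪v, u⟫_𝕜‖ ^ 2 / ‖v‖ ^ 2 : ℝ) : 𝕜) := by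
  rw [starProjection_singleton, inner_smul_right, ← inner_conj_symm u v, div_mul_eq_mul_div,
    RCLike.mul_conj]
  push_cast
  rfl

theorem inner_sub_inner_smul_of_norm_eq_one {e : E} (he : ‖e‖ = 1) (b : E) :
    ⟪e, b - ⟪e, b⟫_𝕜 • e⟫_𝕜 = 0 := by
  rw [inner_sub_right, inner_smul_right, inner_self_eq_norm_sq_to_K, he]
  simp

theorem norm_sub_inner_smul_sq_of_norm_eq_one {e : E} (he : ‖e‖ = 1) (b : E) :
    ‖b - ⟪e, b⟫_𝕜 • e‖ ^ 2 = ‖b‖ ^ 2 - ‖⟪e, b⟫_𝕜‖ ^ 2 := by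
  have hortho : ⟪b - ⟪e, b⟫_𝕜 • e, ⟪e, b⟫_𝕜 • e⟫_𝕜 = 0 := by
    rw [inner_smul_right, inner_eq_zero_symm.mp (inner_sub_inner_smul_of_norm_eq_one he b),
      mul_zero]
  have hpythagoras := norm_add_sq_eq_norm_sq_add_norm_sq_of_inner_eq_zero _ _ hortho
  rw [sub_add_cancel, norm_smul, he, mul_one, ← sq, ← sq, ← sq] at hpythagoras
  linarith

theorem span_pair_eq_sup_span_sub_smul (e b : E) (c : 𝕜) :
    span 𝕜 {e, b} = (𝕜 ∙ e) ⊔ (𝕜 ∙ (b - c • e)) := by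
  have he : c • e ∈ (𝕜 ∙ e) := smul_mem _ c (mem_span_singleton_self e)
  rw [span_insert]
  apply le_antisymm <;> refine sup_le le_sup_left ((span_singleton_le_iff_mem _ _).mpr ?_)
  · simpa using add_mem (mem_sup_right (mem_span_singleton_self (b - c • e))) (mem_sup_left he)
  · exact sub_mem (mem_sup_right (mem_span_singleton_self b)) (mem_sup_left he)

/-- For `b ∈ 𝕜 ∙ e` the last term is `0 / 0 = 0`, which is still the right value. -/
theorem inner_sub_starProjection_span_pair {e : E} (he : ‖e‖ = 1) (b u : E)
    [(span 𝕜 {e, b}).HasOrthogonalProjection] :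
    ⟪u, u - (span 𝕜 {e, b}).starProjection u⟫_𝕜 =
      ((‖u‖ ^ 2 - ‖⟪e, u⟫_𝕜‖ ^ 2 : ℝ) : 𝕜) -
        ((‖⟪u, b⟫_𝕜 - ⟪u, e⟫_𝕜 * ⟪e, b⟫_𝕜‖ ^ 2 / (‖b‖ ^ 2 - ‖⟪e, b⟫_𝕜‖ ^ 2) : ℝ) : 𝕜) := by
  set d := b - ⟪e, b⟫_𝕜 • e
  have hspan := span_pair_eq_sup_span_sub_smul e b ⟪e, b⟫_𝕜
  have hortho : (𝕜 ∙ e) ⟂ (𝕜 ∙ d) :=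
    isOrtho_span.mpr (by simpa only [Set.mem_singleton_iff, forall_eq]
      using inner_sub_inner_smul_of_norm_eq_one he b)
  have : ((𝕜 ∙ e) ⊔ (𝕜 ∙ d)).HasOrthogonalProjection := hspan ▸ inferInstance
  have hproj : (span 𝕜 {e, b}).starProjection u =
      (𝕜 ∙ e).starProjection u + (𝕜 ∙ d).starProjection u := by
    simp_rw [hspan]
    exact hortho.starProjection_sup u
  have hud : ⟪u, d⟫_𝕜 = ⟪u, b⟫_𝕜 - ⟪u, e⟫_𝕜 * ⟪e, b⟫_𝕜 := by
    simp only [d, inner_sub_right, inner_smul_right]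
    ring
  rw [hproj, inner_sub_right, inner_add_right, inner_starProjection_singleton_right,
    inner_starProjection_singleton_right, he, ← norm_sub_inner_smul_sq_of_norm_eq_one he b,
    norm_inner_symm d, hud, inner_self_eq_norm_sq_to_K]
  push_cast
  ring

end

theorem stmt_1_general
    {H : Type*} [NormedAddCommGroup H] [InnerProductSpace ℂ H]
    (L₁ L₂ : H →L[ℂ] H) (ψ : H) (hψ : ‖ψ‖ = 1)
    (P : H →ₗ[ℂ] H)
    (hrange : LinearMap.range P = Submodule.span ℂ {ψ, L₂ ψ})
    (hidem : P ∘ₗ P = P)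
    (hsa : ∀ x y : H, (inner ℂ (P x) y : ℂ) = inner ℂ x (P y)) :
    (inner ℂ (L₁ ψ) (L₁ ψ - P (L₁ ψ)) : ℂ)
      = (((‖L₁ ψ‖ ^ 2 - ‖(inner ℂ ψ (L₁ ψ) : ℂ)‖ ^ 2) : ℝ) : ℂ)
        - (((‖(inner ℂ (L₁ ψ) (L₂ ψ) : ℂ) - inner ℂ (L₁ ψ) ψ * inner ℂ ψ (L₂ ψ)‖ ^ 2
            / (‖L₂ ψ‖ ^ 2 - ‖(inner ℂ ψ (L₂ ψ) : ℂ)‖ ^ 2)) : ℝ) : ℂ) := by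
  have : FiniteDimensional ℂ (span ℂ {ψ, L₂ ψ}) := FiniteDimensional.span_of_finite ℂ (by simp)
  rw [LinearMap.IsSymmetricProjection.eq_starProjection ⟨hidem, hsa⟩ hrange]
  exact inner_sub_starProjection_span_pair hψ (L₂ ψ) (L₁ ψ)

/-- For bounded operators `L₁` (signal) and `L₂` (noise), a unit vector
`ψ`, and `P` the orthogonal projection onto `span{ψ, L₂ψ}`: if `Var_ψ(L₂) > 0`, then
`⟨ψ, L₁†(I − P)L₁ψ⟩ = Var_ψ(L₁) − |Cov_ψ(L₁, L₂)|² / Var_ψ(L₂)`. -/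
theorem stmt_1
    {H : Type*} [NormedAddCommGroup H] [InnerProductSpace ℂ H]
    (L₁ L₂ : H →L[ℂ] H) (ψ : H) (hψ : ‖ψ‖ = 1)
    (P : H →ₗ[ℂ] H)
    (hrange : LinearMap.range P = Submodule.span ℂ {ψ, L₂ ψ})
    (hidem : P ∘ₗ P = P)
    (hsa : ∀ x y : H, (inner ℂ (P x) y : ℂ) = inner ℂ x (P y))
    (hvar : (0 : ℝ) < ‖L₂ ψ‖ ^ 2 - ‖(inner ℂ ψ (L₂ ψ) : ℂ)‖ ^ 2) :
    (inner ℂ (L₁ ψ) (L₁ ψ - P (L₁ ψ)) : ℂ)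
      = (((‖L₁ ψ‖ ^ 2 - ‖(inner ℂ ψ (L₁ ψ) : ℂ)‖ ^ 2) : ℝ) : ℂ)
        - (((‖(inner ℂ (L₁ ψ) (L₂ ψ) : ℂ) - inner ℂ (L₁ ψ) ψ * inner ℂ ψ (L₂ ψ)‖ ^ 2
            / (‖L₂ ψ‖ ^ 2 - ‖(inner ℂ ψ (L₂ ψ) : ℂ)‖ ^ 2)) : ℝ) : ℂ) :=
  stmt_1_general L₁ L₂ ψ hψ P hrange hidem hsa
end

section
/- Let l₁, l₂ ∈ ℝ³ be zero-sum, orthogonal, unit vectors (Σ_α l_{j,α} = 0, l₁·l₂ = 0, ‖l_j‖₂ = 1), and suppose every entry of l₁ is nonzero. Then the supremum over probability distributions p on {1,2,3} of Var_p(l₁) − Cov_p(l₁,l₂)²/Var_p(l₂) (over p with Var_p(l₂) > 0; the expression is defined as Var_p(l₁) when Cov_p(l₁,l₂)=0 and Var_p(l₂)=0) equals ‖l₁‖₂⁴/‖l₁‖₁² = 1/‖l₁‖₁², attained by p_α = |l_{1,α}|/‖l₁‖₁. -/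
/-!
Complete `x = l₁`, `y = l₂` by `𝟙 = (1,1,1)` to an orthogonal frame of `ℝ³`. Since the rows of
`M = [x; y; 𝟙]` are orthogonal, so are its (rescaled) columns, which gives
`Var_p(y) = 3 (p₁p₂ x₀² + p₀p₂ x₁² + p₀p₁ x₂²)`; and by Lagrange's identity the Gram determinant
`Var_p(x) Var_p(y) − Cov_p(x,y)²` is `p₀p₁p₂ · det M² = 3 p₀p₁p₂`. So the objective equals
`p₀p₁p₂ / (p₁p₂ x₀² + p₀p₂ x₁² + p₀p₁ x₂²)`, and Cauchy–Schwarz `∑ x_α² / p_α ≥ ‖x‖₁²` bounds it by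
`1 / ‖x‖₁²`, with equality for `p ∝ |x|`. If `Var_p(y) = 0`, then `p` is a point mass because no
`x_α` vanishes, and the objective is `Var_p(x) = 0`.
-/

open Finset Matrix

section Weighted

variable {ι : Type*} [Fintype ι]

def weightedVar (p u : ι → ℝ) : ℝ := ∑ a, p a * u a ^ 2 - (∑ a, p a * u a) ^ 2

def weightedCov (p u v : ι → ℝ) : ℝ :=
  ∑ a, p a * (u a * v a) - (∑ a, p a * u a) * (∑ a, p a * v a)

noncomputable def absWeights (x : ι → ℝ) (a : ι) : ℝ := |x a| / ∑ b, |x b|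

theorem sum_absWeights {x : ι → ℝ} (hx : x ≠ 0) : ∑ a, absWeights x a = 1 := by
  have hN : ∑ b, |x b| ≠ 0 := by
    contrapose! hx
    ext a
    simpa using (sum_eq_zero_iff_of_nonneg fun b _ ↦ abs_nonneg (x b)).1 hx a (mem_univ a)
  simp only [absWeights, ← sum_div, div_self hN]

end Weighted

theorem weightedVar_fin_three {p : Fin 3 → ℝ} (hp : ∑ a, p a = 1) (u : Fin 3 → ℝ) :
    weightedVar p u = p 0 * p 1 * (u 0 - u 1) ^ 2 + p 1 * p 2 * (u 1 - u 2) ^ 2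
      + p 0 * p 2 * (u 0 - u 2) ^ 2 := by
  rw [Fin.sum_univ_three] at hp
  simp only [weightedVar, Fin.sum_univ_three]
  linear_combination (-(p 0 * u 0 ^ 2 + p 1 * u 1 ^ 2 + p 2 * u 2 ^ 2)) * hp

theorem weightedCov_fin_three {p : Fin 3 → ℝ} (hp : ∑ a, p a = 1) (u v : Fin 3 → ℝ) :
    weightedCov p u v = p 0 * p 1 * ((u 0 - u 1) * (v 0 - v 1))
      + p 1 * p 2 * ((u 1 - u 2) * (v 1 - v 2)) + p 0 * p 2 * ((u 0 - u 2) * (v 0 - v 2)) := by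
  rw [Fin.sum_univ_three] at hp
  simp only [weightedCov, Fin.sum_univ_three]
  linear_combination (-(p 0 * (u 0 * v 0) + p 1 * (u 1 * v 1) + p 2 * (u 2 * v 2))) * hp

/-- Cauchy–Schwarz in Engel form, `a²/P + b²/Q + c²/R ≥ (a + b + c)²`, cleared of denominators. -/
theorem mul_mul_mul_sq_add_add_le {P Q R : ℝ} (hP : 0 ≤ P) (hQ : 0 ≤ Q) (hR : 0 ≤ R)
    (hs : P + Q + R = 1) (a b c : ℝ) :
    P * Q * R * (a + b + c) ^ 2 ≤ Q * R * a ^ 2 + P * R * b ^ 2 + P * Q * c ^ 2 := by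
  have hsos : Q * R * a ^ 2 + P * R * b ^ 2 + P * Q * c ^ 2 - P * Q * R * (a + b + c) ^ 2
      = R * (Q * a - P * b) ^ 2 + Q * (R * a - P * c) ^ 2 + P * (R * b - Q * c) ^ 2 := by
    linear_combination (-(Q * R * a ^ 2 + P * R * b ^ 2 + P * Q * c ^ 2)) * hs
  have : 0 ≤ R * (Q * a - P * b) ^ 2 + Q * (R * a - P * c) ^ 2 + P * (R * b - Q * c) ^ 2 := by
    positivity
  linarith

theorem mul_mul_mul_sq_add_add_eq_of_div {a b c : ℝ} :
    let N := a + b + c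
    a / N * (b / N) * (c / N) * N ^ 2
      = b / N * (c / N) * a ^ 2 + a / N * (c / N) * b ^ 2 + a / N * (b / N) * c ^ 2 := by
  intro N
  rcases eq_or_ne N 0 with hN | hN
  · simp [hN]
  · field_simp
    ring

structure IsZeroSumOrthonormal (x y : Fin 3 → ℝ) : Prop where
  sum_fst : ∑ a, x a = 0
  sum_snd : ∑ a, y a = 0
  dot : ∑ a, x a * y a = 0
  sq_fst : ∑ a, x a ^ 2 = 1
  sq_snd : ∑ a, y a ^ 2 = 1

namespace IsZeroSumOrthonormal

section Frame

variable {x y : Fin 3 → ℝ} (h : IsZeroSumOrthonormal x y)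
include h

theorem frame_mul_transpose :
    Matrix.of ![x, y, 1] * (Matrix.of ![x, y, 1])ᵀ = diagonal ![1, 1, 3] := by
  have hyx : ∑ a, y a * x a = 0 := by simpa only [mul_comm] using h.dot
  ext i j
  fin_cases i <;> fin_cases j <;>
    simp [Matrix.mul_apply, ← sq, h.sum_fst, h.sum_snd, h.dot, hyx, h.sq_fst, h.sq_snd]

theorem det_frame_sq : (Matrix.of ![x, y, 1]).det ^ 2 = 3 := by
  have := congrArg det h.frame_mul_transpose
  rw [det_mul, det_transpose, det_diagonal, Fin.prod_univ_three] at this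
  simpa [sq] using this

/-- Orthogonality of the columns of the frame: a right inverse of a square matrix is a left
inverse. -/
theorem mul_add_mul_eq (a b : Fin 3) :
    x a * x b + y a * y b = (if a = b then 1 else 0) - 1 / 3 := by
  have hinv : (diagonal ![1, 1, 1 / 3] * Matrix.of ![x, y, 1]) * (Matrix.of ![x, y, 1])ᵀ = 1 := by
    rw [Matrix.mul_assoc, h.frame_mul_transpose, diagonal_mul_diagonal, ← diagonal_one]
    congr 1
    ext i
    fin_cases i <;> norm_num
  have := Matrix.ext_iff.mpr (mul_eq_one_comm.mp hinv) a b
  simp only [Matrix.mul_apply, transpose_apply, of_apply, cons_val', Pi.one_apply, cons_val_fin_one,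
    Fin.sum_univ_three, cons_val_zero, cons_val_one, Matrix.cons_val, mul_one, diagonal_apply_eq,
    one_mul, diagonal_apply_ne, ne_eq, Fin.reduceEq, not_false_eq_true, zero_mul, add_zero, zero_add,
    one_apply] at this
  linear_combination this

theorem snd_sub_snd_sq {a b : Fin 3} (hab : a ≠ b) : (y a - y b) ^ 2 = 2 - (x a - x b) ^ 2 := by
  have haa := h.mul_add_mul_eq a a
  have hbb := h.mul_add_mul_eq b b
  have hab' := h.mul_add_mul_eq a b
  simp only [↓reduceIte, if_neg hab] at haa hbb hab'
  linear_combination haa + hbb - 2 * hab'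

end Frame

section Moments

variable {x y p : Fin 3 → ℝ} (h : IsZeroSumOrthonormal x y) (hp : ∑ a, p a = 1)
include h hp

theorem weightedVar_snd : weightedVar p y
    = 3 * (p 1 * p 2 * x 0 ^ 2 + p 0 * p 2 * x 1 ^ 2 + p 0 * p 1 * x 2 ^ 2) := by
  have hsum := h.sum_fst
  have hsq := h.sq_fst
  rw [Fin.sum_univ_three] at hsum hsq
  rw [weightedVar_fin_three hp, h.snd_sub_snd_sq (by decide : (0 : Fin 3) ≠ 1),
    h.snd_sub_snd_sq (by decide : (1 : Fin 3) ≠ 2), h.snd_sub_snd_sq (by decide : (0 : Fin 3) ≠ 2)]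
  have hx2 : x 2 = -x 0 - x 1 := by linear_combination hsum
  rw [hx2] at hsq ⊢
  linear_combination (-2 * p 0 * p 1 - 2 * p 1 * p 2 - 2 * p 0 * p 2) * hsq

/-- By Lagrange's identity the left side is a weighted sum of squared `2 × 2` minors of the
differences of `x` and `y`, each of which is `± det [x; y; 𝟙]`. -/
theorem weightedVar_mul_weightedVar_sub_sq_weightedCov :
    weightedVar p x * weightedVar p y - weightedCov p x y ^ 2 = 3 * (p 0 * p 1 * p 2) := by
  have hdet := h.det_frame_sq
  rw [det_fin_three] at hdet
  simp only [of_apply, cons_val', Pi.one_apply, cons_val_fin_one, cons_val_zero, cons_val_one,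
    Matrix.cons_val] at hdet
  have hp' := hp
  rw [Fin.sum_univ_three] at hp'
  rw [weightedVar_fin_three hp, weightedVar_fin_three hp, weightedCov_fin_three hp]
  linear_combination
    (p 0 * p 1 * (p 1 * p 2) + p 0 * p 1 * (p 0 * p 2) + p 1 * p 2 * (p 0 * p 2)) * hdet
      + 3 * (p 0 * p 1 * p 2) * hp'

theorem weightedVar_sub_sq_weightedCov_div (hy : weightedVar p y ≠ 0) :
    weightedVar p x - weightedCov p x y ^ 2 / weightedVar p y
      = p 0 * p 1 * p 2 / (p 1 * p 2 * x 0 ^ 2 + p 0 * p 2 * x 1 ^ 2 + p 0 * p 1 * x 2 ^ 2) := by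
  have hgram := h.weightedVar_mul_weightedVar_sub_sq_weightedCov hp
  rw [h.weightedVar_snd hp] at hgram hy ⊢
  rw [sub_div' hy, hgram, mul_div_mul_left _ _ three_ne_zero]

end Moments

section Extremal

variable {x y : Fin 3 → ℝ} (h : IsZeroSumOrthonormal x y) (hx : ∀ a, x a ≠ 0)
include h hx

theorem weightedVar_sub_sq_weightedCov_div_le {p : Fin 3 → ℝ} (hp0 : ∀ a, 0 ≤ p a)
    (hp : ∑ a, p a = 1) :
    weightedVar p x - weightedCov p x y ^ 2 / weightedVar p y ≤ 1 / (∑ a, |x a|) ^ 2 := by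
  have hN : 0 < ∑ a, |x a| := sum_pos (fun a _ ↦ abs_pos.2 (hx a)) univ_nonempty
  have h01 := mul_nonneg (mul_nonneg (hp0 0) (hp0 1)) (sq_nonneg (x 2))
  have h12 := mul_nonneg (mul_nonneg (hp0 1) (hp0 2)) (sq_nonneg (x 0))
  have h02 := mul_nonneg (mul_nonneg (hp0 0) (hp0 2)) (sq_nonneg (x 1))
  rcases (add_nonneg (add_nonneg h12 h02) h01).eq_or_lt with hS | hS
  · have hy : weightedVar p y = 0 := by rw [h.weightedVar_snd hp, ← hS, mul_zero]
    have h01' : p 0 * p 1 = 0 :=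
      (mul_eq_zero.1 (by linarith : p 0 * p 1 * x 2 ^ 2 = 0)).resolve_right (pow_ne_zero 2 (hx 2))
    have h12' : p 1 * p 2 = 0 :=
      (mul_eq_zero.1 (by linarith : p 1 * p 2 * x 0 ^ 2 = 0)).resolve_right (pow_ne_zero 2 (hx 0))
    have h02' : p 0 * p 2 = 0 :=
      (mul_eq_zero.1 (by linarith : p 0 * p 2 * x 1 ^ 2 = 0)).resolve_right (pow_ne_zero 2 (hx 1))
    rw [hy, div_zero, sub_zero, weightedVar_fin_three hp, h01', h12', h02']
    simp only [zero_mul, add_zero]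
    positivity
  · rw [h.weightedVar_sub_sq_weightedCov_div hp (by rw [h.weightedVar_snd hp]; positivity),
      div_le_div_iff₀ hS (by positivity), one_mul, Fin.sum_univ_three, ← sq_abs (x 0),
      ← sq_abs (x 1), ← sq_abs (x 2)]
    rw [Fin.sum_univ_three] at hp
    exact mul_mul_mul_sq_add_add_le (hp0 0) (hp0 1) (hp0 2) hp _ _ _

theorem weightedVar_sub_sq_weightedCov_div_absWeights :
    weightedVar (absWeights x) x - weightedCov (absWeights x) x y ^ 2 / weightedVar (absWeights x) y
      = 1 / (∑ a, |x a|) ^ 2 := by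
  set p := absWeights x
  have hN : 0 < ∑ a, |x a| := sum_pos (fun a _ ↦ abs_pos.2 (hx a)) univ_nonempty
  have hp : ∑ a, p a = 1 := sum_absWeights fun h0 ↦ hx 0 (congrFun h0 0)
  have hpos : 0 < p 0 * p 1 * p 2 := by
    have := hx 0; have := hx 1; have := hx 2
    simp only [p, absWeights]
    positivity
  have heq : p 0 * p 1 * p 2 * (∑ a, |x a|) ^ 2
      = p 1 * p 2 * x 0 ^ 2 + p 0 * p 2 * x 1 ^ 2 + p 0 * p 1 * x 2 ^ 2 := by
    simp only [p, absWeights, Fin.sum_univ_three]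
    rw [← sq_abs (x 0), ← sq_abs (x 1), ← sq_abs (x 2)]
    exact mul_mul_mul_sq_add_add_eq_of_div
  have hy : weightedVar p y ≠ 0 := by
    rw [h.weightedVar_snd hp, ← heq]
    exact mul_ne_zero three_ne_zero (mul_pos hpos (pow_pos hN 2)).ne'
  rw [h.weightedVar_sub_sq_weightedCov_div hp hy, ← heq, div_mul_cancel_left₀ hpos.ne', one_div]

end Extremal

end IsZeroSumOrthonormal

/-- For zero-sum orthogonal unit vectors `l₁, l₂ ∈ ℝ³` with all entries
of `l₁` nonzero, the supremum over probability distributions `p` on `{1,2,3}` of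
`Var_p(l₁) − Cov_p(l₁,l₂)²/Var_p(l₂)` (with the convention that the quotient term is
`0` when `Var_p(l₂) = 0`, which is Lean's division convention) equals
`‖l₁‖₂⁴/‖l₁‖₁²`, attained by `p_α = |l₁_α|/‖l₁‖₁`. -/
theorem stmt_8 (l₁ l₂ : Fin 3 → ℝ)
    (hzs1 : ∑ α, l₁ α = 0) (hzs2 : ∑ α, l₂ α = 0)
    (horth : ∑ α, l₁ α * l₂ α = 0)
    (hn1 : ∑ α, (l₁ α) ^ 2 = 1) (hn2 : ∑ α, (l₂ α) ^ 2 = 1)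
    (hnz : ∀ α, l₁ α ≠ 0) :
    IsGreatest
      { v : ℝ | ∃ p : Fin 3 → ℝ, (∀ α, 0 ≤ p α) ∧ (∑ α, p α) = 1 ∧
          v = ((∑ α, p α * (l₁ α) ^ 2) - (∑ α, p α * l₁ α) ^ 2)
            - ((∑ α, p α * (l₁ α * l₂ α))
                - (∑ α, p α * l₁ α) * (∑ α, p α * l₂ α)) ^ 2
              / ((∑ α, p α * (l₂ α) ^ 2) - (∑ α, p α * l₂ α) ^ 2) }
      ((∑ α, (l₁ α) ^ 2) ^ 2 / (∑ α, |l₁ α|) ^ 2) ∧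
    (let p : Fin 3 → ℝ := fun α => |l₁ α| / ∑ β, |l₁ β|
     ((∑ α, p α * (l₁ α) ^ 2) - (∑ α, p α * l₁ α) ^ 2)
       - ((∑ α, p α * (l₁ α * l₂ α))
           - (∑ α, p α * l₁ α) * (∑ α, p α * l₂ α)) ^ 2
         / ((∑ α, p α * (l₂ α) ^ 2) - (∑ α, p α * l₂ α) ^ 2)
       = (∑ α, (l₁ α) ^ 2) ^ 2 / (∑ α, |l₁ α|) ^ 2) := by
  have h : IsZeroSumOrthonormal l₁ l₂ := ⟨hzs1, hzs2, horth, hn1, hn2⟩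
  have hmax := h.weightedVar_sub_sq_weightedCov_div_absWeights hnz
  rw [hn1, one_pow]
  refine ⟨⟨⟨absWeights l₁, fun α ↦ by rw [absWeights]; positivity,
    sum_absWeights fun h0 ↦ hnz 0 (congrFun h0 0), hmax.symm⟩, ?_⟩, hmax⟩
  rintro v ⟨p, hp0, hp, rfl⟩
  exact h.weightedVar_sub_sq_weightedCov_div_le hnz hp0 hp
end
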